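/- arXiv:1108.6101 — 2 statements merged into one kernel-verified Lean document; each statement's English description precedes it below -/
import Mathlib

section
/- Let (g1, g2) be a matched pair of Lie algebras and a = g1 ⋈ g2 their double crossed sum. A vector space M with linear maps ∇1: M → g1 ⊗ M and ∇2: M → g2 ⊗ M carries an a-comodule structure via m ↦ (∇1(m) + ∇2(m)) ∈ a ⊗ M if and only if ∇1 is a g1-comodule structure, ∇2 is a g2-comodule structure, and the mixed compatibility m[−1] ⊗ m[0]⟨−1⟩ ⊗ m[0]⟨0⟩ = m⟨0⟩[−1] ⊗ m⟨−1⟩ ⊗ m⟨0⟩[0] holds in g1 ⊗ g2 ⊗ M, where [·] denotes ∇1 and ⟨·⟩ denotes ∇2. -/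
/-!
The comultiplication target `a ⊗ a ⊗ M` of `a = g₁ × g₂` splits into the four summands
`gᵢ ⊗ gⱼ ⊗ M`, and swapping the first two legs carries the `(i, j)` summand to the `(j, i)` one.
The `(i, j)` component of `(1 ⊗ ∇) ∘ ∇` for `∇ = ∇₁ + ∇₂` is `(1 ⊗ ∇ⱼ) ∘ ∇ᵢ`, so the comodule
condition for `∇` splits into the comodule conditions for `∇₁` and `∇₂` (diagonal components)
and the mixed compatibility (each off-diagonal component, the two being equivalent because the
swap is an involution).
-/

open TensorProduct LinearMap

noncomputable section

/-- Swap the first two legs of `A ⊗ (B ⊗ M)`. -/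
def swapHead (k A B M : Type) [Field k] [AddCommGroup A] [Module k A]
    [AddCommGroup B] [Module k B] [AddCommGroup M] [Module k M] :
    A ⊗[k] (B ⊗[k] M) →ₗ[k] B ⊗[k] (A ⊗[k] M) :=
  (TensorProduct.assoc k B A M).toLinearMap ∘ₗ
    (LinearMap.rTensor M (TensorProduct.comm k A B).toLinearMap) ∘ₗ
      (TensorProduct.assoc k A B M).symm.toLinearMap

/-- Left Lie algebra comodule condition. -/
def IsLieComodule {k g M : Type} [Field k] [AddCommGroup g] [Module k g]
    [AddCommGroup M] [Module k M] (cm : M →ₗ[k] g ⊗[k] M) : Prop :=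
  (swapHead k g g M) ∘ₗ (LinearMap.lTensor g cm) ∘ₗ cm = (LinearMap.lTensor g cm) ∘ₗ cm

section

variable {k A B A' B' M N X : Type} [Field k]
  [AddCommGroup A] [Module k A] [AddCommGroup B] [Module k B]
  [AddCommGroup A'] [Module k A'] [AddCommGroup B'] [Module k B']
  [AddCommGroup M] [Module k M] [AddCommGroup N] [Module k N] [AddCommGroup X] [Module k X]

@[simp]
lemma swapHead_tmul (a : A) (b : B) (m : M) :
    swapHead k A B M (a ⊗ₜ (b ⊗ₜ m)) = b ⊗ₜ (a ⊗ₜ m) := by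
  simp [swapHead]

lemma swapHead_comp_swapHead : swapHead k B A M ∘ₗ swapHead k A B M = LinearMap.id := by
  ext a b m
  simp

lemma swapHead_comp_map (f : A →ₗ[k] A') (g : B →ₗ[k] B') :
    swapHead k A' B' M ∘ₗ map f (rTensor M g) = map g (rTensor M f) ∘ₗ swapHead k A B M := by
  ext a b m
  simp

lemma map_comp_lTensor_comp (n : M →ₗ[k] X ⊗[k] M) (q : X →ₗ[k] A) (r : X →ₗ[k] B) :
    map q (rTensor M r) ∘ₗ lTensor X n ∘ₗ n = lTensor A (rTensor M r ∘ₗ n) ∘ₗ rTensor M q ∘ₗ n := by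
  rw [← comp_assoc, map_comp_lTensor, ← lTensor_comp_rTensor, comp_assoc]

lemma rTensor_fst_comp_inl_add_inr (f : M →ₗ[k] A ⊗[k] M) (g : M →ₗ[k] B ⊗[k] M) :
    rTensor M (fst k A B) ∘ₗ (rTensor M (inl k A B) ∘ₗ f + rTensor M (inr k A B) ∘ₗ g) = f := by
  rw [comp_add, ← comp_assoc, ← comp_assoc, ← rTensor_comp, ← rTensor_comp, fst_comp_inl,
    fst_comp_inr, rTensor_id, rTensor_zero, id_comp, zero_comp, add_zero]

lemma rTensor_snd_comp_inl_add_inr (f : M →ₗ[k] A ⊗[k] M) (g : M →ₗ[k] B ⊗[k] M) :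
    rTensor M (snd k A B) ∘ₗ (rTensor M (inl k A B) ∘ₗ f + rTensor M (inr k A B) ∘ₗ g) = g := by
  rw [comp_add, ← comp_assoc, ← comp_assoc, ← rTensor_comp, ← rTensor_comp, snd_comp_inl,
    snd_comp_inr, rTensor_id, rTensor_zero, id_comp, zero_comp, zero_add]

lemma map_prod_ext {F G : N →ₗ[k] (A × B) ⊗[k] ((A × B) ⊗[k] M)}
    (h₁₁ : map (fst k A B) (rTensor M (fst k A B)) ∘ₗ F
      = map (fst k A B) (rTensor M (fst k A B)) ∘ₗ G)
    (h₁₂ : map (fst k A B) (rTensor M (snd k A B)) ∘ₗ F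
      = map (fst k A B) (rTensor M (snd k A B)) ∘ₗ G)
    (h₂₁ : map (snd k A B) (rTensor M (fst k A B)) ∘ₗ F
      = map (snd k A B) (rTensor M (fst k A B)) ∘ₗ G)
    (h₂₂ : map (snd k A B) (rTensor M (snd k A B)) ∘ₗ F
      = map (snd k A B) (rTensor M (snd k A B)) ∘ₗ G) :
    F = G := by
  have hid : map (inl k A B) (rTensor M (inl k A B)) ∘ₗ map (fst k A B) (rTensor M (fst k A B))
      + map (inl k A B) (rTensor M (inr k A B)) ∘ₗ map (fst k A B) (rTensor M (snd k A B))
      + map (inr k A B) (rTensor M (inl k A B)) ∘ₗ map (snd k A B) (rTensor M (fst k A B))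
      + map (inr k A B) (rTensor M (inr k A B)) ∘ₗ map (snd k A B) (rTensor M (snd k A B))
      = LinearMap.id := by
    ext a b m <;> simp
  rw [← id_comp F, ← id_comp G, ← hid]
  simp only [add_comp, comp_assoc, h₁₁, h₁₂, h₂₁, h₂₂]

lemma swapHead_comp_eq_self_iff (T : N →ₗ[k] (A × B) ⊗[k] ((A × B) ⊗[k] M)) :
    swapHead k (A × B) (A × B) M ∘ₗ T = T ↔
      swapHead k A A M ∘ₗ map (fst k A B) (rTensor M (fst k A B)) ∘ₗ T
          = map (fst k A B) (rTensor M (fst k A B)) ∘ₗ T ∧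
        swapHead k B B M ∘ₗ map (snd k A B) (rTensor M (snd k A B)) ∘ₗ T
          = map (snd k A B) (rTensor M (snd k A B)) ∘ₗ T ∧
        map (fst k A B) (rTensor M (snd k A B)) ∘ₗ T
          = swapHead k B A M ∘ₗ map (snd k A B) (rTensor M (fst k A B)) ∘ₗ T := by
  have swap_component {C D : Type} [AddCommGroup C] [Module k C] [AddCommGroup D] [Module k D]
      (f : A × B →ₗ[k] C) (g : A × B →ₗ[k] D) :
      map g (rTensor M f) ∘ₗ swapHead k (A × B) (A × B) M ∘ₗ T
        = swapHead k C D M ∘ₗ map f (rTensor M g) ∘ₗ T := by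
    rw [← comp_assoc, ← swapHead_comp_map, comp_assoc]
  constructor
  · intro h
    refine ⟨?_, ?_, ?_⟩ <;> rw [← swap_component, h]
  · rintro ⟨h₁₁, h₂₂, h₁₂⟩
    apply map_prod_ext <;> rw [swap_component]
    · exact h₁₁
    · exact h₁₂.symm
    · rw [h₁₂, ← comp_assoc, swapHead_comp_swapHead, id_comp]
    · exact h₂₂

end

theorem comodule_over_double_crossed_sum_iff_general
    {k : Type} [Field k]
    {g₁ g₂ : Type} [LieRing g₁] [LieAlgebra k g₁] [LieRing g₂] [LieAlgebra k g₂]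
    {M : Type} [AddCommGroup M] [Module k M]
    (cm₁ : M →ₗ[k] g₁ ⊗[k] M) (cm₂ : M →ₗ[k] g₂ ⊗[k] M) :
    -- the combined map is an `a = g₁ ⋈ g₂` comodule structure iff ...
    IsLieComodule
      ((LinearMap.rTensor M (LinearMap.inl k g₁ g₂)) ∘ₗ cm₁
        + (LinearMap.rTensor M (LinearMap.inr k g₁ g₂)) ∘ₗ cm₂)
      ↔
    (IsLieComodule cm₁ ∧ IsLieComodule cm₂ ∧
      -- mixed compatibility in `g₁ ⊗ (g₂ ⊗ M)`
      (LinearMap.lTensor g₁ cm₂) ∘ₗ cm₁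
        = (swapHead k g₂ g₁ M) ∘ₗ (LinearMap.lTensor g₂ cm₁) ∘ₗ cm₂) := by
  set n := rTensor M (inl k g₁ g₂) ∘ₗ cm₁ + rTensor M (inr k g₁ g₂) ∘ₗ cm₂
  have hn₁ : rTensor M (fst k g₁ g₂) ∘ₗ n = cm₁ := rTensor_fst_comp_inl_add_inr cm₁ cm₂
  have hn₂ : rTensor M (snd k g₁ g₂) ∘ₗ n = cm₂ := rTensor_snd_comp_inl_add_inr cm₁ cm₂
  rw [IsLieComodule, swapHead_comp_eq_self_iff]
  simp only [map_comp_lTensor_comp, hn₁, hn₂]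
  exact Iff.rfl

theorem comodule_over_double_crossed_sum_iff
    {k : Type} [Field k] [CharZero k]
    {g₁ g₂ : Type} [LieRing g₁] [LieAlgebra k g₁] [LieRing g₂] [LieAlgebra k g₂]
    -- matched pair data (the comodule conditions do not involve the brackets,
    -- but `(g₁, g₂)` is a matched pair with double crossed sum `a = g₁ × g₂`)
    (tl : g₂ →ₗ[k] g₁ →ₗ[k] g₂) (tr : g₂ →ₗ[k] g₁ →ₗ[k] g₁)
    (h1 : ∀ (ζ ξ : g₂) (X : g₁), tr ⁅ζ, ξ⁆ X = tr ζ (tr ξ X) - tr ξ (tr ζ X))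
    (h2 : ∀ (ζ : g₂) (X Y : g₁), tl ζ ⁅X, Y⁆ = tl (tl ζ X) Y - tl (tl ζ Y) X)
    (h3 : ∀ (ζ : g₂) (X Y : g₁),
      tr ζ ⁅X, Y⁆ = ⁅tr ζ X, Y⁆ + ⁅X, tr ζ Y⁆ + tr (tl ζ X) Y - tr (tl ζ Y) X)
    (h4 : ∀ (ζ ξ : g₂) (X : g₁),
      tl ⁅ζ, ξ⁆ X = ⁅tl ζ X, ξ⁆ + ⁅ζ, tl ξ X⁆ + tl ζ (tr ξ X) - tl ξ (tr ζ X))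
    {M : Type} [AddCommGroup M] [Module k M]
    (cm₁ : M →ₗ[k] g₁ ⊗[k] M) (cm₂ : M →ₗ[k] g₂ ⊗[k] M) :
    -- the combined map is an `a = g₁ ⋈ g₂` comodule structure iff ...
    IsLieComodule
      ((LinearMap.rTensor M (LinearMap.inl k g₁ g₂)) ∘ₗ cm₁
        + (LinearMap.rTensor M (LinearMap.inr k g₁ g₂)) ∘ₗ cm₂)
      ↔
    (IsLieComodule cm₁ ∧ IsLieComodule cm₂ ∧
      -- mixed compatibility in `g₁ ⊗ (g₂ ⊗ M)`
      (LinearMap.lTensor g₁ cm₂) ∘ₗ cm₁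
        = (swapHead k g₂ g₁ M) ∘ₗ (LinearMap.lTensor g₂ cm₁) ∘ₗ cm₂) :=
  comodule_over_double_crossed_sum_iff_general cm₁ cm₂

end
end

section
/- Let a = g1 ⋈ g2 be a double crossed sum of Lie algebras and M a left a-comodule, with induced g1-coaction ∇1 = (p1 ⊗ id)∘∇_a and g2-coaction ∇2 = (p2 ⊗ id)∘∇_a. Then ∇_a is locally conilpotent if and only if both ∇1 and ∇2 are locally conilpotent. -/
/-!
STATEMENT 9: Let `a = g₁ ⋈ g₂` be a double crossed sum of Lie algebras (underlying
vector space `g₁ × g₂`) and `M` a left `a`-comodule, with induced `g₁`- and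
`g₂`-coactions obtained by projecting. Then the `a`-coaction is locally conilpotent
if and only if both induced coactions are locally conilpotent.  (Local conilpotency
of a coaction `∇ : M → h ⊗ M` is expressed by: for each `m` there is `n` such that
every `n`-fold iteration of the component operators `(φ ⊗ id) ∘ ∇`, `φ ∈ h*`,
annihilates `m`; over a field this is equivalent to the vanishing of `∇ⁿ(m)`.)
-/

open TensorProduct LinearMap

noncomputable section

/-- The component operator `(φ ⊗ id) ∘ ∇ : M → M` of a coaction, for `φ ∈ h*`. -/
def coactComp {k h M : Type} [Field k] [AddCommGroup h] [Module k h]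
    [AddCommGroup M] [Module k M] (cm : M →ₗ[k] h ⊗[k] M)
    (φ : Module.Dual k h) : M →ₗ[k] M :=
  (TensorProduct.lid k M).toLinearMap ∘ₗ (LinearMap.rTensor M φ) ∘ₗ cm

/-- Local conilpotency of a Lie algebra coaction. -/
def LocallyConilpotent {k h M : Type} [Field k] [AddCommGroup h] [Module k h]
    [AddCommGroup M] [Module k M] (cm : M →ₗ[k] h ⊗[k] M) : Prop :=
  ∀ m : M, ∃ n : ℕ, ∀ φs : List (Module.Dual k h), φs.length = n →
    φs.foldr (fun φ (x : M) => coactComp cm φ x) m = 0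

/-!
The comodule condition makes the component operators `(φ ⊗ id) ∘ ∇`, `φ ∈ a*`,
commute pairwise. Each component operator of `∇ₐ` is the sum of one of `∇₁` and one of `∇₂`
(split `φ` along `a = g₁ × g₂`), and conversely those of `∇₁`, `∇₂` are among those of `∇ₐ`.
If every word of length `n₁` in the `∇₁`-operators and every word of length `n₂` in the
`∇₂`-operators kills `m`, then expanding a word of length `n₁ + n₂` in the `∇ₐ`-operators and
sorting each summand by commutativity, every summand contains a long enough word of one kind.
-/

section Words

variable {R M ι α β : Type} [Semiring R] [AddCommMonoid M] [Module R M]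

def AnnihilatedByWords (T : ι → Module.End R M) (n : ℕ) (m : M) : Prop :=
  ∀ l : List ι, l.length = n → l.foldr (fun i x => T i x) m = 0

theorem List.foldr_apply_eq_prod_map (T : ι → Module.End R M) (l : List ι) (m : M) :
    l.foldr (fun i x => T i x) m = (l.map T).prod m := by
  induction l with
  | nil => rfl
  | cons i l ih => simp [ih, Module.End.mul_apply]

namespace AnnihilatedByWords

variable {T : ι → Module.End R M} {n : ℕ} {m : M}

theorem zero_iff : AnnihilatedByWords T 0 m ↔ m = 0 :=
  ⟨fun h => h [] rfl, fun h l hl => by simp [List.length_eq_zero_iff.mp hl, h]⟩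

theorem comp (f : α → ι) (h : AnnihilatedByWords T n m) :
    AnnihilatedByWords (fun a => T (f a)) n m := fun l hl => by
  simpa [List.foldr_map] using h (l.map f) (by simpa using hl)

theorem apply_of_succ (h : AnnihilatedByWords T (n + 1) m) (i : ι) :
    AnnihilatedByWords T n (T i m) := fun l hl => by
  simpa using h (l ++ [i]) (by simp [hl])

theorem apply_of_commute {f : Module.End R M} (hf : ∀ i, Commute f (T i))
    (h : AnnihilatedByWords T n m) : AnnihilatedByWords T n (f m) := fun l hl => by
  have hcomm : Commute f (l.map T).prod :=
    Commute.list_prod_right _ _ fun _ hx => by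
      obtain ⟨i, -, rfl⟩ := List.mem_map.mp hx
      exact hf i
  rw [List.foldr_apply_eq_prod_map, ← Module.End.mul_apply, ← hcomm.eq, Module.End.mul_apply,
    ← List.foldr_apply_eq_prod_map, h l hl, map_zero]

/-- Peel off the letter applied first: `T i m = A a m + B b m`, and `A a m` is killed by
`A`-words one letter shorter and, by commutativity, still by all `B`-words of length `n₂`. -/
theorem of_decomp {A : α → Module.End R M} {B : β → Module.End R M}
    (hT : ∀ i, ∃ a b, T i = A a + B b) (hAB : ∀ a b, Commute (A a) (B b)) :
    ∀ {n₁ n₂ : ℕ} {m : M}, AnnihilatedByWords A n₁ m → AnnihilatedByWords B n₂ m →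
      AnnihilatedByWords T (n₁ + n₂) m := by
  intro n₁ n₂ m hA hB l hl
  induction l using List.reverseRecOn generalizing n₁ n₂ m with
  | nil =>
    obtain rfl : n₁ = 0 := by simp at hl; omega
    exact zero_iff.mp hA
  | append_singleton l i ih =>
    rw [List.length_append, List.length_singleton] at hl
    rw [List.foldr_append, List.foldr_cons, List.foldr_nil]
    cases n₁ with
    | zero => simp [zero_iff.mp hA, List.foldr_apply_eq_prod_map]
    | succ n₁ =>
    cases n₂ with
    | zero => simp [zero_iff.mp hB, List.foldr_apply_eq_prod_map]
    | succ n₂ =>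
      obtain ⟨a, b, hab⟩ := hT i
      rw [hab, LinearMap.add_apply, List.foldr_apply_eq_prod_map, map_add,
        ← List.foldr_apply_eq_prod_map, ← List.foldr_apply_eq_prod_map,
        ih (hA.apply_of_succ a) (hB.apply_of_commute fun b' => hAB a b') (by omega),
        ih (hA.apply_of_commute fun a' => (hAB a' b).symm) (hB.apply_of_succ b) (by omega),
        add_zero]

end AnnihilatedByWords

end Words

section Coaction

variable {k h h' M : Type} [Field k] [AddCommGroup h] [Module k h]
  [AddCommGroup h'] [Module k h'] [AddCommGroup M] [Module k M]

theorem locallyConilpotent_iff (cm : M →ₗ[k] h ⊗[k] M) :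
    LocallyConilpotent cm ↔ ∀ m, ∃ n, AnnihilatedByWords (coactComp cm) n m :=
  Iff.rfl

def dualContract (φ : Module.Dual k h) : h ⊗[k] M →ₗ[k] M :=
  (TensorProduct.lid k M).toLinearMap ∘ₗ LinearMap.rTensor M φ

@[simp]
theorem dualContract_tmul (φ : Module.Dual k h) (a : h) (m : M) :
    dualContract φ (a ⊗ₜ m) = φ a • m := by
  simp [dualContract]

theorem coactComp_eq_dualContract_comp (cm : M →ₗ[k] h ⊗[k] M) (φ : Module.Dual k h) :
    coactComp cm φ = dualContract φ ∘ₗ cm :=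
  rfl

theorem coactComp_add (cm : M →ₗ[k] h ⊗[k] M) (φ ψ : Module.Dual k h) :
    coactComp cm (φ + ψ) = coactComp cm φ + coactComp cm ψ := by
  simp [coactComp, LinearMap.rTensor_add, LinearMap.comp_add, LinearMap.add_comp]

theorem coactComp_rTensor_comp (cm : M →ₗ[k] h' ⊗[k] M) (p : h' →ₗ[k] h) :
    coactComp (LinearMap.rTensor M p ∘ₗ cm) =
      fun φ : Module.Dual k h => coactComp cm (φ ∘ₗ p) := by
  funext φ
  simp only [coactComp, LinearMap.rTensor_comp, LinearMap.comp_assoc]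

theorem dualContract_comp_lTensor_dualContract_comp_swapHead (φ ψ : Module.Dual k h) :
    (dualContract ψ ∘ₗ LinearMap.lTensor h (dualContract (M := M) φ)) ∘ₗ swapHead k h h M =
      dualContract φ ∘ₗ LinearMap.lTensor h (dualContract ψ) := by
  ext a b m
  simp [swapHead, smul_comm (ψ b) (φ a)]

theorem coactComp_mul_coactComp (cm : M →ₗ[k] h ⊗[k] M) (φ ψ : Module.Dual k h) :
    coactComp cm φ * coactComp cm ψ =
      (dualContract ψ ∘ₗ LinearMap.lTensor h (dualContract φ)) ∘ₗ
        LinearMap.lTensor h cm ∘ₗ cm := by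
  have hnat : coactComp cm φ ∘ₗ dualContract ψ =
      dualContract ψ ∘ₗ LinearMap.lTensor h (coactComp cm φ) := by
    ext a m
    simp
  rw [Module.End.mul_eq_comp, coactComp_eq_dualContract_comp cm ψ, ← LinearMap.comp_assoc, hnat,
    coactComp_eq_dualContract_comp, LinearMap.lTensor_comp]
  rfl

theorem IsLieComodule.commute_coactComp {cm : M →ₗ[k] h ⊗[k] M} (hc : IsLieComodule cm)
    (φ ψ : Module.Dual k h) : Commute (coactComp cm φ) (coactComp cm ψ) :=
  calc coactComp cm φ * coactComp cm ψ
      = (dualContract ψ ∘ₗ LinearMap.lTensor h (dualContract φ)) ∘ₗ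
          swapHead k h h M ∘ₗ LinearMap.lTensor h cm ∘ₗ cm := by
        rw [coactComp_mul_coactComp, hc]
    _ = (dualContract φ ∘ₗ LinearMap.lTensor h (dualContract ψ)) ∘ₗ
          LinearMap.lTensor h cm ∘ₗ cm := by
        rw [← LinearMap.comp_assoc, dualContract_comp_lTensor_dualContract_comp_swapHead]
    _ = coactComp cm ψ * coactComp cm φ := (coactComp_mul_coactComp cm ψ φ).symm

theorem LocallyConilpotent.rTensor_comp {cm : M →ₗ[k] h' ⊗[k] M} (hcm : LocallyConilpotent cm)
    (p : h' →ₗ[k] h) : LocallyConilpotent (LinearMap.rTensor M p ∘ₗ cm) := by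
  rw [locallyConilpotent_iff] at hcm ⊢
  intro m
  obtain ⟨n, hn⟩ := hcm m
  rw [coactComp_rTensor_comp]
  exact ⟨n, hn.comp (· ∘ₗ p)⟩

theorem LocallyConilpotent.of_fst_of_snd {g₁ g₂ : Type} [AddCommGroup g₁] [Module k g₁]
    [AddCommGroup g₂] [Module k g₂] {cm : M →ₗ[k] (g₁ × g₂) ⊗[k] M} (hc : IsLieComodule cm)
    (h₁ : LocallyConilpotent (LinearMap.rTensor M (LinearMap.fst k g₁ g₂) ∘ₗ cm))
    (h₂ : LocallyConilpotent (LinearMap.rTensor M (LinearMap.snd k g₁ g₂) ∘ₗ cm)) :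
    LocallyConilpotent cm := by
  intro m
  obtain ⟨n₁, hn₁⟩ := h₁ m
  obtain ⟨n₂, hn₂⟩ := h₂ m
  rw [coactComp_rTensor_comp] at hn₁ hn₂
  refine ⟨n₁ + n₂, AnnihilatedByWords.of_decomp (fun ψ => ⟨ψ ∘ₗ LinearMap.inl k g₁ g₂,
    ψ ∘ₗ LinearMap.inr k g₁ g₂, ?_⟩) (fun φ₁ φ₂ => hc.commute_coactComp _ _) hn₁ hn₂⟩
  rw [← coactComp_add]
  exact congrArg _ (LinearMap.coprod_comp_inl_inr ψ).symm

end Coaction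

theorem locally_conilpotent_iff_components_general
    {k : Type} [Field k]
    {g₁ g₂ : Type} [LieRing g₁] [LieAlgebra k g₁] [LieRing g₂] [LieAlgebra k g₂]
    {M : Type} [AddCommGroup M] [Module k M]
    -- a left comodule over `a = g₁ ⋈ g₂`
    (cmₐ : M →ₗ[k] (g₁ × g₂) ⊗[k] M)
    (hcomod : IsLieComodule cmₐ) :
    LocallyConilpotent cmₐ ↔
      (LocallyConilpotent ((LinearMap.rTensor M (LinearMap.fst k g₁ g₂)) ∘ₗ cmₐ) ∧
       LocallyConilpotent ((LinearMap.rTensor M (LinearMap.snd k g₁ g₂)) ∘ₗ cmₐ)) :=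
  ⟨fun h => ⟨h.rTensor_comp _, h.rTensor_comp _⟩,
    fun ⟨h₁, h₂⟩ => .of_fst_of_snd hcomod h₁ h₂⟩

theorem locally_conilpotent_iff_components
    {k : Type} [Field k] [CharZero k]
    {g₁ g₂ : Type} [LieRing g₁] [LieAlgebra k g₁] [LieRing g₂] [LieAlgebra k g₂]
    {M : Type} [AddCommGroup M] [Module k M]
    -- a left comodule over `a = g₁ ⋈ g₂`
    (cmₐ : M →ₗ[k] (g₁ × g₂) ⊗[k] M)
    (hcomod : IsLieComodule cmₐ) :
    LocallyConilpotent cmₐ ↔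
      (LocallyConilpotent ((LinearMap.rTensor M (LinearMap.fst k g₁ g₂)) ∘ₗ cmₐ) ∧
       LocallyConilpotent ((LinearMap.rTensor M (LinearMap.snd k g₁ g₂)) ∘ₗ cmₐ)) :=
  locally_conilpotent_iff_components_general cmₐ hcomod

end
end
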